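/- Let F = FreeGroup α be a free group with a distinguished generator a = of(s), word metric d(x,y) = |x⁻¹y|, γ_v = {g ∈ F : for all sufficiently large k ∈ ℕ, d(v, a^k) = d(v,g) + d(g, a^k)}, and γ_v^n = {g ∈ γ_v : d(v,g) ≤ n}. If x, y ∈ F satisfy d(x,y) ≤ m, then for every n ∈ ℕ the kernel u_n(x,y) = |γ_x^n ∩ γ_y^n|/(n+1) satisfies (n − m)/(n + 1) ≤ u_n(x,y) ≤ 1. -/

import Mathlib

/-! The Cayley graph of a free group is a tree. Hence `γ_v` is the unique geodesic ray from `v`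
towards the end `a^∞`: `d(v, ·)` is injective on it, so `γ_v^n` has at most `n + 1` points. The rays
`γ_x` and `γ_y` pass through the median `z` of `x`, `y` and a far point `a^K`, and from there on
coincide with `γ_z`; since `d(x, z) + d(z, y) = d(x, y) ≤ m`, the points of `γ_z` at distance at most
`n - m` from `z` all lie in `γ_x^n ∩ γ_y^n`. -/

/-- The word metric on the free group: `d x y = |x⁻¹y|`, the length of the
reduced word of `x⁻¹y`. -/
def wordDist {α : Type*} [DecidableEq α] (x y : FreeGroup α) : ℕ :=
  (x⁻¹ * y).toWord.length

/-- The geodesic ray issuing from `v` and merging with the ray `γ₀ = {a^k : k ≥ 0}`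
where `a = FreeGroup.of s`. -/
def gammaRay {α : Type*} [DecidableEq α] (s : α) (v : FreeGroup α) : Set (FreeGroup α) :=
  {g | ∀ᶠ k : ℕ in Filter.atTop,
    wordDist v ((FreeGroup.of s) ^ k) =
      wordDist v g + wordDist g ((FreeGroup.of s) ^ k)}

/-- The initial segment `γ_v^n` of length `n` of the geodesic ray `γ_v`. -/
def gammaSeg {α : Type*} [DecidableEq α] (s : α) (v : FreeGroup α) (n : ℕ) :
    Set (FreeGroup α) :=
  {g ∈ gammaRay s v | wordDist v g ≤ n}

open FreeGroup Filter

section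

variable {α : Type*} [DecidableEq α]

theorem wordDist_eq_norm (x y : FreeGroup α) : wordDist x y = (x⁻¹ * y).norm := rfl

theorem wordDist_comm (x y : FreeGroup α) : wordDist x y = wordDist y x := by
  rw [wordDist_eq_norm, wordDist_eq_norm, ← norm_inv_eq, mul_inv_rev, inv_inv]

theorem wordDist_triangle (x y z : FreeGroup α) :
    wordDist x z ≤ wordDist x y + wordDist y z := by
  simpa only [wordDist_eq_norm, mul_assoc, mul_inv_cancel_left] using
    norm_mul_le (x⁻¹ * y) (y⁻¹ * z)

theorem wordDist_pow_pow (s : α) {j k : ℕ} (h : j ≤ k) :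
    wordDist (of s ^ j) (of s ^ k) = k - j := by
  obtain ⟨i, rfl⟩ := Nat.exists_eq_add_of_le h
  rw [wordDist_eq_norm, pow_add, inv_mul_cancel_left, norm_of_pow]
  omega

theorem le_norm_add_wordDist_pow (s : α) (v : FreeGroup α) (k : ℕ) :
    k ≤ v.norm + wordDist v (of s ^ k) := by
  have h := wordDist_triangle 1 v (of s ^ k)
  rwa [wordDist_eq_norm 1 (of s ^ k), wordDist_eq_norm 1 v, inv_one, one_mul, one_mul,
    norm_of_pow] at h

def Between (x g y : FreeGroup α) : Prop :=
  wordDist x y = wordDist x g + wordDist g y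

section Between

variable {v g h w : FreeGroup α}

theorem Between.trans_left (hw : Between v w h) (hg : Between v g w) : Between v g h := by
  unfold Between at *
  have := wordDist_triangle v g h
  have := wordDist_triangle g w h
  omega

theorem Between.trans_right (hg : Between v g w) (hh : Between g h w) : Between v h w := by
  unfold Between at *
  have := wordDist_triangle v h w
  have := wordDist_triangle v g h
  omega

theorem Between.trans_right_left (hg : Between v g w) (hh : Between g h w) : Between v g h := by
  unfold Between at *
  have := wordDist_triangle v h w
  have := wordDist_triangle v g h
  omega

end Between

theorem toWord_mul_of_norm_mul_eq {x y : FreeGroup α} (h : (x * y).norm = x.norm + y.norm) :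
    (x * y).toWord = x.toWord ++ y.toWord :=
  (toWord_mul_sublist x y).eq_of_length (by simpa [FreeGroup.norm] using h)

theorem Between.toWord_eq_take {v g w : FreeGroup α} (h : Between v g w) :
    (v⁻¹ * g).toWord = (v⁻¹ * w).toWord.take (wordDist v g) := by
  have hvw : v⁻¹ * g * (g⁻¹ * w) = v⁻¹ * w := by group
  rw [← hvw, toWord_mul_of_norm_mul_eq (x := v⁻¹ * g) (y := g⁻¹ * w) (by rw [hvw]; exact h)]
  exact (List.take_left' rfl).symm

theorem Between.eq_of_wordDist_eq {v g h w : FreeGroup α} (hg : Between v g w)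
    (hh : Between v h w) (hgh : wordDist v g = wordDist v h) : g = h :=
  mul_left_cancel (toWord_injective (by rw [hg.toWord_eq_take, hh.toWord_eq_take, hgh]))

theorem toWord_mk_of_isReduced {L : List (α × Bool)} (h : IsReduced L) : (mk L).toWord = L := by
  rw [toWord_mk, h.reduce_eq]

theorem isReduced_invRev {L : List (α × Bool)} (h : IsReduced L) : IsReduced (invRev L) := by
  rw [isReduced_iff_reduce_eq, reduce_invRev, h.reduce_eq]

theorem isReduced_invRev_append {P Q : List (α × Bool)} (hP : IsReduced P) (hQ : IsReduced Q)
    (hPQ : ∀ a ∈ P.head?, ∀ b ∈ Q.head?, a ≠ b) : IsReduced (invRev P ++ Q) := by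
  refine List.IsChain.append (isReduced_invRev hP) hQ ?_
  rintro a' ha' b hb
  cases P with
  | nil => simp [invRev] at ha'
  | cons a P =>
    simp only [invRev, List.map_cons, List.reverse_cons, List.getLast?_append,
      List.getLast?_singleton, Option.some_or, Option.mem_def, Option.some.injEq] at ha'
    subst ha'
    have hab := hPQ a rfl b hb
    rintro (h1 : a.1 = b.1)
    obtain ⟨a₁, a₂⟩ := a
    obtain ⟨b₁, b₂⟩ := b
    cases a₂ <;> cases b₂ <;> simp_all

theorem toWord_mk_of_toWord_eq_append {g : FreeGroup α} {C D : List (α × Bool)}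
    (h : g.toWord = C ++ D) : (mk C).toWord = C :=
  toWord_mk_of_isReduced ((h ▸ isReduced_toWord).infix (List.prefix_append C D).isInfix)

theorem toWord_inv_mk_mul_of_toWord_eq_append {g : FreeGroup α} {C D : List (α × Bool)}
    (h : g.toWord = C ++ D) : ((mk C)⁻¹ * g).toWord = D := by
  rw [← mk_toWord (x := g), h, ← mul_mk, inv_mul_cancel_left]
  exact toWord_mk_of_isReduced ((h ▸ isReduced_toWord).infix (List.suffix_append C D).isInfix)

theorem between_mul_mk_of_toWord_eq_append {v w : FreeGroup α} {C D : List (α × Bool)}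
    (h : (v⁻¹ * w).toWord = C ++ D) :
    Between v (v * mk C) w ∧ wordDist v (v * mk C) = C.length := by
  have hC : wordDist v (v * mk C) = C.length := by
    rw [wordDist_eq_norm, inv_mul_cancel_left, FreeGroup.norm, toWord_mk_of_toWord_eq_append h]
  refine ⟨?_, hC⟩
  rw [Between, hC, wordDist_eq_norm (v * mk C), mul_inv_rev, mul_assoc, FreeGroup.norm,
    toWord_inv_mk_mul_of_toWord_eq_append h, wordDist_eq_norm, FreeGroup.norm, h,
    List.length_append]

theorem exists_between_wordDist_eq {v w : FreeGroup α} {i : ℕ} (hi : i ≤ wordDist v w) :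
    ∃ g, Between v g w ∧ wordDist v g = i := by
  obtain ⟨hb, hd⟩ := between_mul_mk_of_toWord_eq_append
    (List.take_append_drop i (v⁻¹ * w).toWord).symm
  exact ⟨_, hb, by rw [hd, List.length_take]; exact min_eq_left hi⟩

theorem List.exists_eq_append_eq_append_head?_ne {β : Type*} :
    ∀ P Q : List β, ∃ C P' Q', P = C ++ P' ∧ Q = C ++ Q' ∧
      ∀ a ∈ P'.head?, ∀ b ∈ Q'.head?, a ≠ b
  | [], Q => ⟨[], [], Q, rfl, rfl, by simp⟩
  | a :: P, [] => ⟨[], a :: P, [], rfl, rfl, by simp⟩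
  | a :: P, b :: Q => by
    by_cases hab : a = b
    · obtain ⟨C, P', Q', rfl, rfl, hne⟩ := exists_eq_append_eq_append_head?_ne P Q
      exact ⟨a :: C, P', Q', rfl, by rw [hab]; rfl, hne⟩
    · exact ⟨[], a :: P, b :: Q, rfl, rfl, by simpa using hab⟩

/-- The median is `x * mk C`, with `C` the longest common prefix of the reduced words of `x⁻¹ * y`
and `x⁻¹ * w`. -/
theorem exists_median (x y w : FreeGroup α) :
    ∃ z, Between x z y ∧ Between x z w ∧ Between y z w := by
  obtain ⟨C, P, Q, hP, hQ, hPQ⟩ :=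
    List.exists_eq_append_eq_append_head?_ne (x⁻¹ * y).toWord (x⁻¹ * w).toWord
  obtain ⟨hxzy, -⟩ := between_mul_mk_of_toWord_eq_append hP
  obtain ⟨hxzw, -⟩ := between_mul_mk_of_toWord_eq_append hQ
  refine ⟨x * mk C, hxzy, hxzw, ?_⟩
  have hzy := toWord_inv_mk_mul_of_toWord_eq_append hP
  have hzw := toWord_inv_mk_mul_of_toWord_eq_append hQ
  have hyw : y⁻¹ * w = ((mk C)⁻¹ * (x⁻¹ * y))⁻¹ * ((mk C)⁻¹ * (x⁻¹ * w)) := by group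
  have hzy' : wordDist y (x * mk C) = P.length := by
    rw [wordDist_comm, wordDist_eq_norm, mul_inv_rev, mul_assoc, FreeGroup.norm, hzy]
  have hzw' : wordDist (x * mk C) w = Q.length := by
    rw [wordDist_eq_norm, mul_inv_rev, mul_assoc, FreeGroup.norm, hzw]
  have hPQ' : IsReduced (invRev P ++ Q) :=
    isReduced_invRev_append (hzy ▸ isReduced_toWord) (hzw ▸ isReduced_toWord) hPQ
  rw [Between, hzy', hzw', wordDist_eq_norm, hyw, ← mk_toWord (x := (mk C)⁻¹ * (x⁻¹ * y)),
    ← mk_toWord (x := (mk C)⁻¹ * (x⁻¹ * w)), hzy, hzw, inv_mk, mul_mk, FreeGroup.norm,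
    toWord_mk_of_isReduced hPQ', List.length_append, invRev_length]

theorem norm_mul_of_mul_of_eq_succ {g : FreeGroup α} {s : α} (h : (g * of s).norm = g.norm + 1) :
    (g * of s * of s).norm = (g * of s).norm + 1 := by
  have hw : (g * of s).toWord = g.toWord ++ [(s, true)] := by
    rw [toWord_mul_of_norm_mul_eq (by rwa [norm_of]), toWord_of]
  have hred : IsReduced (g.toWord ++ [(s, true)] ++ [(s, true)]) :=
    (hw ▸ isReduced_toWord).append_overlap (by simp [FreeGroup.IsReduced]) (List.cons_ne_nil _ _)
  rw [FreeGroup.norm, FreeGroup.norm, toWord_mul, hw, toWord_of, hred.reduce_eq]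
  simp

/-- Once a step towards `of s ^ k` increases the distance from `v`, every later step does. -/
theorem eventually_wordDist_pow_succ (s : α) (v : FreeGroup α) :
    ∀ᶠ k in atTop, wordDist v (of s ^ (k + 1)) = wordDist v (of s ^ k) + 1 := by
  set f : ℕ → ℕ := fun k ↦ wordDist v (of s ^ k)
  have hstep : ∀ k, f (k + 1) = f k + 1 → f (k + 1 + 1) = f (k + 1) + 1 := fun k h ↦ by
    simpa only [f, wordDist_eq_norm, pow_succ, ← mul_assoc] using norm_mul_of_mul_of_eq_succ
      (by simpa only [f, wordDist_eq_norm, pow_succ, ← mul_assoc] using h)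
  have hle : ∀ k, f (k + 1) ≤ f k + 1 := fun k ↦ by
    simpa only [f, wordDist_pow_pow s (by omega : k ≤ k + 1), Nat.add_sub_cancel_left] using
      wordDist_triangle v (of s ^ k) (of s ^ (k + 1))
  obtain ⟨k₀, hk₀⟩ : ∃ k, f (k + 1) = f k + 1 := by
    by_contra! hne
    have hanti : ∀ k, f k ≤ f 0 := fun k ↦ by
      induction k with
      | zero => rfl
      | succ k ih => have := hle k; have := hne k; omega
    have : _ ≤ _ + f _ := le_norm_add_wordDist_pow s v (v.norm + f 0 + 1)
    have := hanti (v.norm + f 0 + 1)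
    omega
  exact eventually_atTop.2 ⟨k₀, Nat.le_induction hk₀ fun k _ ↦ hstep k⟩

theorem mem_gammaRay_iff {s : α} {v g : FreeGroup α} :
    g ∈ gammaRay s v ↔ ∀ᶠ k in atTop, Between v g (of s ^ k) := Iff.rfl

theorem eventually_pow_mem_gammaRay (s : α) (v : FreeGroup α) :
    ∀ᶠ K in atTop, of s ^ K ∈ gammaRay s v := by
  obtain ⟨k₀, hk₀⟩ := eventually_atTop.1 (eventually_wordDist_pow_succ s v)
  filter_upwards [eventually_ge_atTop k₀] with K hK
  rw [mem_gammaRay_iff]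
  filter_upwards [eventually_ge_atTop K] with k hk
  obtain ⟨j, rfl⟩ := Nat.exists_eq_add_of_le hk
  rw [Between, wordDist_pow_pow s hk, Nat.add_sub_cancel_left]
  induction j with
  | zero => rfl
  | succ j ih => rw [← add_assoc, hk₀ _ (by omega), ih (by omega), add_assoc]

theorem mem_gammaRay_of_between {s : α} {v g w : FreeGroup α} (hw : w ∈ gammaRay s v)
    (hg : Between v g w) : g ∈ gammaRay s v :=
  hw.mono fun _ hk ↦ Between.trans_left hk hg

theorem gammaRay_subset {s : α} {v g : FreeGroup α} (hg : g ∈ gammaRay s v) :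
    gammaRay s g ⊆ gammaRay s v := fun _ hh ↦
  (hg.and hh).mono fun _ hk ↦ Between.trans_right hk.1 hk.2

theorem wordDist_add_of_mem_gammaRay {s : α} {v g h : FreeGroup α} (hg : g ∈ gammaRay s v)
    (hh : h ∈ gammaRay s g) : wordDist v h = wordDist v g + wordDist g h :=
  let ⟨_, hk⟩ := (hg.and hh).exists
  Between.trans_right_left hk.1 hk.2

theorem exists_mem_gammaRay_wordDist_eq (s : α) (v : FreeGroup α) (i : ℕ) :
    ∃ g ∈ gammaRay s v, wordDist v g = i := by
  obtain ⟨K, hK, hKi⟩ :=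
    ((eventually_pow_mem_gammaRay s v).and (eventually_ge_atTop (i + v.norm))).exists
  obtain ⟨g, hg, hgi⟩ := exists_between_wordDist_eq (v := v) (w := of s ^ K) (i := i)
    (by have := le_norm_add_wordDist_pow s v K; omega)
  exact ⟨g, mem_gammaRay_of_between hK hg, hgi⟩

theorem injOn_wordDist_gammaRay (s : α) (v : FreeGroup α) :
    Set.InjOn (wordDist v) (gammaRay s v) := fun _ hg _ hh hgh ↦
  let ⟨_, hk⟩ := (hg.and hh).exists
  Between.eq_of_wordDist_eq hk.1 hk.2 hgh

theorem mapsTo_wordDist_gammaSeg (s : α) (v : FreeGroup α) (n : ℕ) :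
    Set.MapsTo (wordDist v) (gammaSeg s v n) (Set.Iic n) := fun _ hg ↦ hg.2

theorem gammaSeg_finite (s : α) (v : FreeGroup α) (n : ℕ) : (gammaSeg s v n).Finite :=
  .of_injOn (mapsTo_wordDist_gammaSeg s v n)
    ((injOn_wordDist_gammaRay s v).mono fun _ hg ↦ hg.1) (Set.finite_Iic n)

theorem ncard_gammaSeg_le (s : α) (v : FreeGroup α) (n : ℕ) : (gammaSeg s v n).ncard ≤ n + 1 := by
  simpa using Set.ncard_le_ncard_of_injOn _ (mapsTo_wordDist_gammaSeg s v n)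
    ((injOn_wordDist_gammaRay s v).mono fun _ hg ↦ hg.1) (Set.finite_Iic n)

theorem exists_mem_gammaRay_inter_between (s : α) (x y : FreeGroup α) :
    ∃ z ∈ gammaRay s x ∩ gammaRay s y, Between x z y := by
  obtain ⟨K, hx, hy⟩ :=
    ((eventually_pow_mem_gammaRay s x).and (eventually_pow_mem_gammaRay s y)).exists
  obtain ⟨z, hxzy, hxzK, hyzK⟩ := exists_median x y (of s ^ K)
  exact ⟨z, ⟨mem_gammaRay_of_between hx hxzK, mem_gammaRay_of_between hy hyzK⟩, hxzy⟩

theorem add_one_le_ncard_gammaSeg_inter_add_wordDist (s : α) (x y : FreeGroup α) (n : ℕ) :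
    n + 1 ≤ (gammaSeg s x n ∩ gammaSeg s y n).ncard + wordDist x y := by
  obtain ⟨z, ⟨hzx, hzy⟩, hxzy⟩ := exists_mem_gammaRay_inter_between s x y
  choose p hp hpz using exists_mem_gammaRay_wordDist_eq s z
  have hmaps : ∀ i ∈ (Finset.range (n + 1 - wordDist x y) : Set ℕ),
      p i ∈ gammaSeg s x n ∩ gammaSeg s y n := by
    intro i hi
    rw [Finset.coe_range, Set.mem_Iio] at hi
    have hyz := wordDist_comm y z
    unfold Between at hxzy
    refine ⟨⟨gammaRay_subset hzx (hp i), ?_⟩, gammaRay_subset hzy (hp i), ?_⟩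
    · rw [wordDist_add_of_mem_gammaRay hzx (hp i), hpz]; omega
    · rw [wordDist_add_of_mem_gammaRay hzy (hp i), hpz]; omega
  have hinj : Set.InjOn p (Finset.range (n + 1 - wordDist x y) : Set ℕ) := fun i _ j _ hij ↦ by
    simpa only [hpz] using congrArg (wordDist z) hij
  have := Set.ncard_le_ncard_of_injOn p hmaps hinj ((gammaSeg_finite s x n).inter_of_left _)
  rw [Set.ncard_coe_finset, Finset.card_range] at this
  omega

end

/-- If `d(x,y) ≤ m`, then for every `n` the kernel
`u_n(x,y) = |γ_x^n ∩ γ_y^n|/(n+1)` satisfies `(n−m)/(n+1) ≤ u_n(x,y) ≤ 1`. -/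
theorem freeGroup_overlap_kernel_bounds {α : Type*} [DecidableEq α]
    (s : α) (m : ℕ) (x y : FreeGroup α) (hxy : wordDist x y ≤ m) (n : ℕ) :
    ((n : ℝ) - m) / (n + 1) ≤
      ((gammaSeg s x n ∩ gammaSeg s y n).ncard : ℝ) / (n + 1) ∧
    ((gammaSeg s x n ∩ gammaSeg s y n).ncard : ℝ) / (n + 1) ≤ 1 := by
  have hlower : n ≤ (gammaSeg s x n ∩ gammaSeg s y n).ncard + m := by
    have := add_one_le_ncard_gammaSeg_inter_add_wordDist s x y n
    omega
  have hupper : (gammaSeg s x n ∩ gammaSeg s y n).ncard ≤ n + 1 :=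
    (Set.ncard_le_ncard Set.inter_subset_left (gammaSeg_finite s x n)).trans
      (ncard_gammaSeg_le s x n)
  have hpos : (0 : ℝ) < n + 1 := by positivity
  constructor
  · gcongr
    rw [sub_le_iff_le_add]
    exact_mod_cast hlower
  · rw [div_le_one hpos]
    exact_mod_cast hupper
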